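/- arXiv:quant-ph/9810091 — 2 statements merged into one kernel-verified Lean document; each statement's English description precedes it below -/
import Mathlib

section
/- Let S = {|α_i⟩⊗|β_i⟩}_{i=1}^{|S|} be an unextendible product basis in H = H_A ⊗ H_B, and let ρ = (dim H − |S|)^{-1} (Id − Σ_i |α_i⟩⟨α_i| ⊗ |β_i⟩⟨β_i|) be the normalized projector onto H_S^⊥. Then ρ is an entangled density matrix, i.e., ρ cannot be written as a convex combination of pure product states. -/
/-! Orthonormality of the UPB `u_i` makes `1 - ∑ |u_i⟩⟨u_i|` the orthogonal projection onto
`H_S^⊥`: it is positive, has trace `dim H - |S|` and kills every `u_i`. If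
`ρ = ∑ p_k |w_k⟩⟨w_k|` with `p_k ≥ 0` and product vectors `w_k`, then
`0 = ⟨u_i, ρ u_i⟩ = ∑ p_k |⟨w_k, u_i⟩|²`, so every `w_k` with `p_k ≠ 0` is orthogonal to the
whole UPB and hence zero by unextendibility. Then `ρ = 0`, contradicting `tr ρ = 1`. -/

open scoped BigOperators ComplexConjugate ComplexOrder

noncomputable section

def inC {ι : Type*} [Fintype ι] (x y : ι → ℂ) : ℂ := ∑ i, conj (x i) * y i

def prodVec {ι κ : Type*} (a : ι → ℂ) (b : κ → ℂ) : ι × κ → ℂ := fun p => a p.1 * b p.2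

def outer {ι : Type*} (x : ι → ℂ) : Matrix ι ι ℂ := Matrix.vecMulVec x (star x)

def ONFam {σ ι : Type*} [DecidableEq σ] [Fintype ι] (f : σ → ι → ℂ) : Prop :=
  ∀ i j, inC (f i) (f j) = if i = j then 1 else 0

def IsUPB {σ ιA ιB : Type*} [DecidableEq σ] [Fintype σ] [Fintype ιA] [Fintype ιB]
    (α : σ → ιA → ℂ) (β : σ → ιB → ℂ) : Prop :=
  ONFam (fun i => prodVec (α i) (β i)) ∧
  Submodule.span ℂ (Set.range fun i => prodVec (α i) (β i)) ≠ ⊤ ∧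
  ∀ (a : ιA → ℂ) (b : ιB → ℂ), a ≠ 0 → b ≠ 0 →
    (∀ i, inC (prodVec (α i) (β i)) (prodVec a b) = 0) → False

def Separable {ιA ιB : Type*} [Fintype ιA] [Fintype ιB]
    (ρ : Matrix (ιA × ιB) (ιA × ιB) ℂ) : Prop :=
  ∃ (k : ℕ) (p : Fin k → ℝ) (a : Fin k → ιA → ℂ) (b : Fin k → ιB → ℂ),
    (∀ i, 0 ≤ p i) ∧ ρ = ∑ i, (p i : ℂ) • outer (prodVec (a i) (b i))

open Matrix

theorem Matrix.PosSemidef.of_isHermitian_of_mul_self {ι R : Type*} [Fintype ι]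
    [CommRing R] [PartialOrder R] [StarRing R] [StarOrderedRing R]
    {M : Matrix ι ι R} (hH : M.IsHermitian) (hM : M * M = M) : M.PosSemidef := by
  simpa only [hH.eq, hM] using posSemidef_conjTranspose_mul_self M

section OuterProduct

variable {ι : Type*} [Fintype ι]

theorem inC_eq_star_dotProduct (x y : ι → ℂ) : inC x y = star x ⬝ᵥ y := by
  simp [inC, dotProduct]

theorem conj_inC (x y : ι → ℂ) : conj (inC x y) = inC y x := by
  simp [inC, map_sum, mul_comm]

theorem inC_eq_zero_comm {x y : ι → ℂ} : inC x y = 0 ↔ inC y x = 0 := by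
  rw [← conj_inC, map_eq_zero]

theorem outer_mulVec (u x : ι → ℂ) : outer u *ᵥ x = inC u x • u := by
  rw [outer, vecMulVec_mulVec, inC_eq_star_dotProduct, op_smul_eq_smul]

theorem outer_mul_outer (x y : ι → ℂ) : outer x * outer y = inC x y • vecMulVec x (star y) := by
  rw [outer, outer, vecMulVec_mul_vecMulVec, inC_eq_star_dotProduct, vecMulVec_smul]

omit [Fintype ι] in
theorem isHermitian_outer (x : ι → ℂ) : (outer x).IsHermitian := by
  ext i j
  simp [outer, conjTranspose_apply, vecMulVec_apply, mul_comm]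

theorem trace_outer (x : ι → ℂ) : (outer x).trace = inC x x := by
  simp [outer, trace, vecMulVec_apply, inC, mul_comm]

theorem star_dotProduct_outer_mulVec (w v : ι → ℂ) :
    star v ⬝ᵥ (outer w *ᵥ v) = Complex.normSq (inC w v) := by
  rw [outer_mulVec, dotProduct_smul, ← inC_eq_star_dotProduct, smul_eq_mul, ← conj_inC w v,
    Complex.mul_conj]

end OuterProduct

namespace ONFam

variable {σ ι : Type*} [DecidableEq σ] [Fintype σ] [Fintype ι] {f : σ → ι → ℂ}

theorem sum_outer_mulVec (hf : ONFam f) (j : σ) : (∑ i, outer (f i)) *ᵥ f j = f j := by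
  simp only [sum_mulVec, outer_mulVec, hf _ j, ite_smul, one_smul, zero_smul,
    Finset.sum_ite_eq', Finset.mem_univ, if_true]

theorem sum_outer_mul_self (hf : ONFam f) :
    (∑ i, outer (f i)) * ∑ i, outer (f i) = ∑ i, outer (f i) := by
  simp only [Finset.sum_mul, Finset.mul_sum, outer_mul_outer, hf _ _, ite_smul, one_smul,
    zero_smul, Finset.sum_ite_eq', Finset.mem_univ, if_true]
  rfl

theorem trace_sum_outer (hf : ONFam f) : (∑ i, outer (f i)).trace = Fintype.card σ := by
  simp [trace_sum, trace_outer, hf _ _]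

variable [DecidableEq ι]

theorem one_sub_sum_outer_mulVec (hf : ONFam f) (j : σ) :
    (1 - ∑ i, outer (f i)) *ᵥ f j = 0 := by
  rw [sub_mulVec, one_mulVec, hf.sum_outer_mulVec, sub_self]

theorem posSemidef_one_sub_sum_outer (hf : ONFam f) : (1 - ∑ i, outer (f i)).PosSemidef := by
  refine .of_isHermitian_of_mul_self ?_ ?_
  · exact isHermitian_one.sub (isSelfAdjoint_sum _ fun i _ => isHermitian_outer (f i))
  · rw [sub_mul, mul_sub, mul_sub, hf.sum_outer_mul_self]
    simp

end ONFam

theorem inC_eq_zero_of_sum_smul_outer_mulVec_eq_zero {ι κ : Type*} [Fintype ι] [Fintype κ]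
    {p : κ → ℝ} (hp : ∀ i, 0 ≤ p i) {w : κ → ι → ℂ} {v : ι → ℂ}
    (hv : (∑ i, (p i : ℂ) • outer (w i)) *ᵥ v = 0) {i : κ} (hpi : p i ≠ 0) :
    inC (w i) v = 0 := by
  have hquad : ∑ i, p i * Complex.normSq (inC (w i) v) = 0 := by
    have := congrArg (star v ⬝ᵥ ·) hv
    simp only [sum_mulVec, smul_mulVec, dotProduct_sum, dotProduct_smul,
      star_dotProduct_outer_mulVec, dotProduct_zero, smul_eq_mul] at this
    exact_mod_cast this
  have hterm := (Finset.sum_eq_zero_iff_of_nonneg fun j _ =>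
    mul_nonneg (hp j) (Complex.normSq_nonneg _)).1 hquad i (Finset.mem_univ i)
  exact Complex.normSq_eq_zero.1 ((mul_eq_zero.1 hterm).resolve_left hpi)

theorem prodVec_eq_zero_of_or {ι κ : Type*} {a : ι → ℂ} {b : κ → ℂ} (h : a = 0 ∨ b = 0) :
    prodVec a b = 0 := by
  rcases h with rfl | rfl <;> ext <;> simp [prodVec]

section UPB

variable {σ ιA ιB : Type*} [DecidableEq σ] [Fintype σ] [Fintype ιA] [Fintype ιB]
  {α : σ → ιA → ℂ} {β : σ → ιB → ℂ}

theorem IsUPB.prodVec_eq_zero (hUPB : IsUPB α β) {a : ιA → ℂ} {b : ιB → ℂ}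
    (hab : ∀ j, inC (prodVec (α j) (β j)) (prodVec a b) = 0) : prodVec a b = 0 :=
  prodVec_eq_zero_of_or <| by
    by_contra! h
    exact hUPB.2.2 a b h.1 h.2 hab

theorem Separable.eq_zero_of_forall_mulVec_eq_zero (hUPB : IsUPB α β)
    {ρ : Matrix (ιA × ιB) (ιA × ιB) ℂ} (hρ : Separable ρ)
    (hker : ∀ j, ρ *ᵥ prodVec (α j) (β j) = 0) : ρ = 0 := by
  obtain ⟨k, p, a, b, hp, rfl⟩ := hρ
  refine Finset.sum_eq_zero fun i _ => ?_
  by_cases hpi : p i = 0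
  · simp [hpi]
  have hab : prodVec (a i) (b i) = 0 := hUPB.prodVec_eq_zero fun j =>
    inC_eq_zero_comm.1 (inC_eq_zero_of_sum_smul_outer_mulVec_eq_zero hp (hker j) hpi)
  simp [hab, outer]

end UPB

/-- the normalized projector onto the complement of a UPB is an
entangled density matrix. -/
theorem upb_state_is_entangled_density_matrix
    (m n s : ℕ) (α : Fin s → Fin m → ℂ) (β : Fin s → Fin n → ℂ)
    (hUPB : IsUPB α β) (hs : s < m * n)
    (ρ : Matrix (Fin m × Fin n) (Fin m × Fin n) ℂ)
    (hρ : ρ = ((m * n - s : ℕ) : ℂ)⁻¹ • (1 - ∑ i, outer (prodVec (α i) (β i)))) :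
    ρ.PosSemidef ∧ ρ.trace = 1 ∧ ¬ Separable ρ := by
  have hON := hUPB.1
  have hdim : ((m * n - s : ℕ) : ℂ) ≠ 0 := Nat.cast_ne_zero.2 (Nat.sub_ne_zero_of_lt hs)
  have htrace : ρ.trace = 1 := by
    rw [hρ, trace_smul, trace_sub, trace_one, hON.trace_sum_outer]
    simp only [Fintype.card_prod, Fintype.card_fin]
    rw [← Nat.cast_sub hs.le, smul_eq_mul, inv_mul_cancel₀ hdim]
  refine ⟨?_, htrace, fun hsep => ?_⟩
  · rw [hρ]
    exact hON.posSemidef_one_sub_sum_outer.smul (inv_nonneg.2 (Nat.cast_nonneg _))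
  · have hker j : ρ *ᵥ prodVec (α j) (β j) = 0 := by
      rw [hρ, smul_mulVec, hON.one_sub_sum_outer_mulVec, smul_zero]
    simp [hsep.eq_zero_of_forall_mulVec_eq_zero hUPB hker] at htrace
end
end

section
/- There is no unextendible product basis in H_2 ⊗ H_n for any n ≥ 2: for every partial product basis S = {|α_i⟩⊗|β_i⟩} spanning a proper subspace of C² ⊗ C^n, the orthogonal complement of span(S) contains a product state. -/
open scoped BigOperators ComplexConjugate

noncomputable section

/-!
For `i ≠ j`, orthogonality of `α i ⊗ β i` and `α j ⊗ β j` means `α i ⊥ α j` or `β i ⊥ β j`.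
In a plane the vectors orthogonal to a nonzero vector form a line, so with `c ⊥ α i₀` every
`α i` is either parallel to `α i₀`, parallel to `c`, or non-orthogonal to both; the `β j` of the
last group `T₀` are orthogonal to all other `β i`. Taking `a = c` (or `a = α i₀`) kills the first
(or second) group, and a suitable `b ∈ W` exists unless the `β`'s of the remaining indices fill
`W`. If they do for both choices, counting dimensions shows that `#T < 2 dim W` passes to `T₀`
with `W` replaced by the span of its `β`'s, and an orthogonal product for `T₀` found there is
orthogonal to the rest as well.
-/

open Finset Module Submodule
open scoped InnerProductSpace

section Linear

variable {K V ι : Type*} [DivisionRing K] [AddCommGroup V] [Module K V]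

theorem finrank_span_image_le_card_sdiff_add [DecidableEq ι] (β : ι → V) (A B : Finset ι) :
    finrank K (span K (β '' A)) ≤ #(A \ B) + finrank K (span K (β '' B)) := by
  classical
  rw [← coe_image, ← coe_image]
  have hsub : span K ((A.image β : Set V)) ≤
      span K ((A \ B).image β : Set V) ⊔ span K (B.image β : Set V) := by
    rw [← span_union, ← coe_union, ← image_union, sdiff_union_self_eq_union]
    exact span_mono (by gcongr; exact subset_union_left)
  calc finrank K (span K ((A.image β : Set V)))
      ≤ finrank K ↥(span K ((A \ B).image β : Set V) ⊔ span K (B.image β : Set V)) :=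
        finrank_mono hsub
    _ ≤ finrank K (span K ((A \ B).image β : Set V)) + finrank K (span K (B.image β : Set V)) :=
      finrank_add_le_finrank_add_finrank _ _
    _ ≤ #(A \ B) + finrank K (span K (B.image β : Set V)) := by
      gcongr
      exact (finrank_span_finset_le_card _).trans card_image_le

theorem card_inter_lt_two_mul_finrank_span [DecidableEq ι] (β : ι → V) {A B T : Finset ι}
    {r : ℕ} (hA : A ⊆ T) (hB : B ⊆ T) (hAr : r ≤ finrank K (span K (β '' A)))
    (hBr : r ≤ finrank K (span K (β '' B))) (hT : #T < 2 * r) :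
    #(A ∩ B) < 2 * finrank K (span K (β '' ↑(A ∩ B))) := by
  have := finrank_span_image_le_card_sdiff_add (K := K) β A (A ∩ B)
  have := finrank_span_image_le_card_sdiff_add (K := K) β B (A ∩ B)
  have := card_union_add_card_inter A B
  have := card_le_card (union_subset hA hB)
  have := card_sdiff_add_card_eq_card (inter_subset_left : A ∩ B ⊆ A)
  have := card_sdiff_add_card_eq_card (inter_subset_right : A ∩ B ⊆ B)
  omega

theorem LinearIndependent.card_lt_finrank [FiniteDimensional K V] [Fintype ι] {b : ι → V}
    (hb : LinearIndependent K b) (hspan : span K (Set.range b) ≠ ⊤) :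
    Fintype.card ι < finrank K V :=
  hb.fintype_card_le_finrank.lt_of_ne (mt hb.span_eq_top_of_card_eq_finrank' hspan)

end Linear

section Inner

variable {𝕜 E F : Type*} [RCLike 𝕜] [NormedAddCommGroup E] [InnerProductSpace 𝕜 E]
  [NormedAddCommGroup F] [InnerProductSpace 𝕜 F]

theorem Submodule.inf_orthogonal_ne_bot_of_finrank_lt [FiniteDimensional 𝕜 E]
    {S W : Submodule 𝕜 E} (h : finrank 𝕜 S < finrank 𝕜 W) : W ⊓ Sᗮ ≠ ⊥ := by
  intro hbot
  have := finrank_sup_add_finrank_inf_eq W Sᗮ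
  have := finrank_add_finrank_orthogonal S
  have := (W ⊔ Sᗮ).finrank_le
  rw [hbot, finrank_bot] at *
  omega

theorem inner_ne_zero_of_inner_eq_zero [Fact (finrank 𝕜 F = 2)] {p q u x : F} (hp : p ≠ 0)
    (hu : u ≠ 0) (hpq : ⟪p, q⟫_𝕜 = 0) (hpu : ⟪p, u⟫_𝕜 = 0) (hxq : ⟪x, q⟫_𝕜 ≠ 0) :
    ⟪x, u⟫_𝕜 ≠ 0 := by
  obtain ⟨l, rfl⟩ :=
    mem_span_singleton.mp (mem_span_singleton_of_inner_eq_zero_of_inner_eq_zero hp hu hpq hpu)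
  intro hxu
  rw [inner_smul_right, hxu, mul_zero] at hxq
  exact hxq rfl

theorem exists_ne_zero_inner_eq_zero [FiniteDimensional 𝕜 F] (hF : 1 < finrank 𝕜 F) (a : F) :
    ∃ c : F, c ≠ 0 ∧ ⟪a, c⟫_𝕜 = 0 := by
  have hlt : finrank 𝕜 (𝕜 ∙ a) < finrank 𝕜 (⊤ : Submodule 𝕜 F) := by
    rw [finrank_top]
    exact (finrank_span_le_card ({a} : Set F)).trans_lt (by simpa using hF)
  obtain ⟨c, ⟨-, hc⟩, hc0⟩ := exists_mem_ne_zero_of_ne_bot (inf_orthogonal_ne_bot_of_finrank_lt hlt)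
  exact ⟨c, hc0, mem_orthogonal_singleton_iff_inner_right.mp hc⟩

end Inner

section ProductVectors

variable {𝕜 E F ι : Type*} [RCLike 𝕜] [NormedAddCommGroup E] [InnerProductSpace 𝕜 E]
  [NormedAddCommGroup F] [InnerProductSpace 𝕜 F]

/-- `a ⊗ b`, with `b ∈ W`, is a nonzero product vector orthogonal to every `α i ⊗ β i`, `i ∈ T`. -/
def HasOrthogonalProduct (α : ι → F) (β : ι → E) (T : Finset ι) (W : Submodule 𝕜 E) : Prop :=
  ∃ a : F, a ≠ 0 ∧ ∃ b ∈ W, b ≠ 0 ∧ ∀ i ∈ T, ⟪α i, a⟫_𝕜 = 0 ∨ ⟪β i, b⟫_𝕜 = 0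

variable [FiniteDimensional 𝕜 E] {α : ι → F} {β : ι → E} {T : Finset ι} {W : Submodule 𝕜 E}

theorem HasOrthogonalProduct.of_finrank_lt {a : F} (ha : a ≠ 0)
    (h : finrank 𝕜 (span 𝕜 (β '' ↑(T.filter fun i => ⟪α i, a⟫_𝕜 ≠ 0))) < finrank 𝕜 W) :
    HasOrthogonalProduct α β T W := by
  obtain ⟨b, ⟨hbW, hb⟩, hb0⟩ := exists_mem_ne_zero_of_ne_bot (inf_orthogonal_ne_bot_of_finrank_lt h)
  refine ⟨a, ha, b, hbW, hb0, fun i hi => or_iff_not_imp_left.mpr fun hia => ?_⟩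
  exact inner_right_of_mem_orthogonal (subset_span (Set.mem_image_of_mem β (by simp [hi, hia]))) hb

theorem hasOrthogonalProduct_of_card_lt [Fact (finrank 𝕜 F = 2)] (hα : ∀ i, α i ≠ 0)
    (hαβ : Pairwise fun i j => ⟪α i, α j⟫_𝕜 = 0 ∨ ⟪β i, β j⟫_𝕜 = 0)
    (hβ : ∀ i ∈ T, β i ∈ W) (hT : #T < 2 * finrank 𝕜 W) : HasOrthogonalProduct α β T W := by
  classical
  induction T using Finset.strongInduction generalizing W with
  | H T ih =>
  have : Nontrivial F := nontrivial_of_finrank_eq_succ (Fact.out : finrank 𝕜 F = 1 + 1)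
  obtain rfl | ⟨i₀, hi₀⟩ := T.eq_empty_or_nonempty
  · obtain ⟨a, ha⟩ := exists_ne (0 : F)
    refine .of_finrank_lt ha ?_
    rw [filter_empty, coe_empty, Set.image_empty, span_empty, finrank_bot]
    omega
  have : FiniteDimensional 𝕜 F := .of_fact_finrank_eq_succ 1
  obtain ⟨c, hc, hi₀c⟩ :=
    exists_ne_zero_inner_eq_zero (by rw [Fact.out (p := finrank 𝕜 F = 2)]; decide) (α i₀)
  let N (a : F) : Finset ι := T.filter fun i => ⟪α i, a⟫_𝕜 ≠ 0
  by_cases h₁ : finrank 𝕜 (span 𝕜 (β '' N c)) < finrank 𝕜 W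
  · exact .of_finrank_lt hc h₁
  by_cases h₂ : finrank 𝕜 (span 𝕜 (β '' N (α i₀))) < finrank 𝕜 W
  · exact .of_finrank_lt (hα i₀) h₂
  set T₀ := N c ∩ N (α i₀)
  have hT₀ : T₀ ⊂ T := (ssubset_iff_of_subset (inter_subset_left.trans (filter_subset _ _))).mpr
    ⟨i₀, hi₀, fun h => (mem_filter.mp (mem_inter.mp h).1).2 hi₀c⟩
  have horth : ∀ i ∈ T, i ∉ T₀ → ∀ j ∈ T₀, ⟪β j, β i⟫_𝕜 = 0 := by
    intro i hi hiT₀ j hj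
    have hne : j ≠ i := by rintro rfl; exact hiT₀ hj
    simp only [T₀, N, mem_inter, mem_filter, hi, true_and, not_and_or, not_not] at hiT₀ hj
    refine (hαβ hne).resolve_left ?_
    rcases hiT₀ with hic | hii₀
    · exact inner_ne_zero_of_inner_eq_zero hc (hα i) (inner_eq_zero_symm.mp hi₀c)
        (inner_eq_zero_symm.mp hic) hj.2.2
    · exact inner_ne_zero_of_inner_eq_zero (hα i₀) (hα i) hi₀c (inner_eq_zero_symm.mp hii₀) hj.1.2
  have hcard : #T₀ < 2 * finrank 𝕜 (span 𝕜 (β '' T₀)) :=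
    card_inter_lt_two_mul_finrank_span β (filter_subset _ T) (filter_subset _ T)
      (not_lt.mp h₁) (not_lt.mp h₂) hT
  obtain ⟨a, ha, b, hb, hb0, hab⟩ :=
    ih T₀ hT₀ (fun j hj => subset_span (Set.mem_image_of_mem β hj)) hcard
  refine ⟨a, ha, b, span_le.mpr (Set.image_subset_iff.mpr fun j hj => hβ j (hT₀.subset hj)) hb,
    hb0, fun i hi => ?_⟩
  by_cases hiT₀ : i ∈ T₀
  · exact hab i hiT₀
  · refine .inr (mem_orthogonal_singleton_iff_inner_right.mp (span_le.mpr ?_ hb))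
    rintro _ ⟨j, hj, rfl⟩
    exact mem_orthogonal_singleton_iff_inner_left.mpr (horth i hi hiT₀ j hj)

end ProductVectors

section Coordinates

theorem inC_eq_inner {ι : Type*} [Fintype ι] (x y : ι → ℂ) :
    inC x y = ⟪WithLp.toLp 2 x, WithLp.toLp 2 y⟫_ℂ := by
  simp [inC, PiLp.inner_apply, mul_comm]

theorem inC_prodVec {ι κ : Type*} [Fintype ι] [Fintype κ] (a c : ι → ℂ) (b d : κ → ℂ) :
    inC (prodVec a b) (prodVec c d) = inC a c * inC b d := by
  simp only [inC, prodVec, Fintype.sum_prod_type, sum_mul_sum, map_mul]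
  exact sum_congr rfl fun i _ => sum_congr rfl fun j _ => by ring

theorem ONFam.orthonormal {σ ι : Type*} [DecidableEq σ] [Fintype ι] {f : σ → ι → ℂ}
    (hf : ONFam f) : Orthonormal ℂ fun i => WithLp.toLp 2 (f i) :=
  orthonormal_iff_ite.mpr fun i j => by rw [← inC_eq_inner]; exact hf i j

end Coordinates

theorem no_upb_in_two_times_n_general
    (n : ℕ) (s : ℕ)
    (α : Fin s → Fin 2 → ℂ) (β : Fin s → Fin n → ℂ)
    (hON : ONFam (fun i => prodVec (α i) (β i)))
    (hproper : Submodule.span ℂ (Set.range fun i => prodVec (α i) (β i)) ≠ ⊤) :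
    ∃ (a : Fin 2 → ℂ) (b : Fin n → ℂ), a ≠ 0 ∧ b ≠ 0 ∧
      ∀ i, inC (prodVec (α i) (β i)) (prodVec a b) = 0 := by
  have hs : s < 2 * n := by
    have hli := hON.orthonormal.linearIndependent.of_comp
      (WithLp.linearEquiv 2 ℂ (Fin 2 × Fin n → ℂ)).symm.toLinearMap
    simpa using hli.card_lt_finrank hproper
  have hα : ∀ i, WithLp.toLp 2 (α i) ≠ 0 := by
    intro i hi
    have := hON i i
    rw [if_pos rfl, inC_prodVec, inC_eq_inner (α i), hi, inner_zero_left, zero_mul] at this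
    exact zero_ne_one this
  have hαβ : Pairwise fun i j =>
      ⟪WithLp.toLp 2 (α i), WithLp.toLp 2 (α j)⟫_ℂ = 0 ∨
        ⟪WithLp.toLp 2 (β i), WithLp.toLp 2 (β j)⟫_ℂ = 0 := by
    intro i j hij
    have := hON i j
    rwa [if_neg hij, inC_prodVec, inC_eq_inner, inC_eq_inner, mul_eq_zero] at this
  have : Fact (finrank ℂ (EuclideanSpace ℂ (Fin 2)) = 2) := ⟨finrank_euclideanSpace_fin⟩
  obtain ⟨a, ha, b, -, hb, hab⟩ := hasOrthogonalProduct_of_card_lt (T := univ) (W := ⊤) hα hαβ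
    (fun _ _ => mem_top) (by simpa using hs)
  refine ⟨a.ofLp, b.ofLp, by simpa using ha, by simpa using hb, fun i => ?_⟩
  rw [inC_prodVec, inC_eq_inner, inC_eq_inner, WithLp.toLp_ofLp, WithLp.toLp_ofLp]
  rcases hab i (mem_univ i) with h | h <;> simp [h]

/-- there is no UPB in `C² ⊗ Cⁿ` (`n ≥ 2`): every partial product
basis spanning a proper subspace can be extended, i.e. some nonzero product
vector is orthogonal to all its members. -/
theorem no_upb_in_two_times_n
    (n : ℕ) (hn : 2 ≤ n) (s : ℕ)
    (α : Fin s → Fin 2 → ℂ) (β : Fin s → Fin n → ℂ)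
    (hON : ONFam (fun i => prodVec (α i) (β i)))
    (hproper : Submodule.span ℂ (Set.range fun i => prodVec (α i) (β i)) ≠ ⊤) :
    ∃ (a : Fin 2 → ℂ) (b : Fin n → ℂ), a ≠ 0 ∧ b ≠ 0 ∧
      ∀ i, inC (prodVec (α i) (β i)) (prodVec a b) = 0 :=
  no_upb_in_two_times_n_general n s α β hON hproper
end
end
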